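/- Let K ≥ 3 be a natural number, let X_0, …, X_K and Y_1, …, Y_{K+1} be random variables, and fix k with 2 ≤ k ≤ K − 1. Write X_i^j for the tuple (X_i, X_{i+1}, …, X_j) and Y_i^j for the tuple (Y_i, …, Y_j). If (X_{k−1}, X_k) – (Y_{k+1}, X_{k+1}^K) – Y_{k+2}^{K+1} and X_0^{k−2} – (Y_{K+1}, X_{k−1}^K) – Y_{k+1}^K are Markov chains, then I(X_0^k ; Y_{k+1}^{K+1} | X_{k+1}^K) = I((X_{k−1}, X_k) ; Y_{k+1} | X_{k+1}^K) + I(X_0^{k−2} ; Y_{K+1} | X_{k−1}^K). -/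

import Mathlib

open MeasureTheory ProbabilityTheory

/-- Shannon entropy of a random variable `X` with values in a finite space,
with respect to the measure `μ`. -/
noncomputable def entropy {Ω S : Type*} [MeasurableSpace Ω] [MeasurableSpace S] [Fintype S]
    (μ : Measure Ω) (X : Ω → S) : ℝ :=
  ∑ x : S, Real.negMulLog ((μ.map X) {x}).toReal

/-- Shannon conditional entropy `H(X | Y)` (as in `ProbabilityTheory.condEntropy`). -/
noncomputable def condEntropy {Ω S T : Type*} [MeasurableSpace Ω] [MeasurableSpace S]
    [MeasurableSpace T] [Fintype S] [Fintype T] (μ : Measure Ω) (X : Ω → S) (Y : Ω → T) : ℝ :=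
  entropy μ (fun ω => (X ω, Y ω)) - entropy μ Y

/-- Conditional mutual information `I(X ; Y | Z)` (as in
`ProbabilityTheory.condMutualInfo`). -/
noncomputable def condMutualInfo {Ω S T U : Type*} [MeasurableSpace Ω] [MeasurableSpace S]
    [MeasurableSpace T] [MeasurableSpace U] [Fintype S] [Fintype T] [Fintype U]
    (μ : Measure Ω) (X : Ω → S) (Y : Ω → T) (Z : Ω → U) : ℝ :=
  condEntropy μ X Z + condEntropy μ Y Z - condEntropy μ (fun ω => (X ω, Y ω)) Z

/-- The tuple `(X_a, X_{a+1}, …, X_b)` of a family of random variables, viewed as a single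
random variable with values in the (finite) product space `∀ l : Set.Icc a b, S l`. -/
abbrev tuple {Ω : Type*} {S : ℕ → Type*} (X : ∀ i, Ω → S i) (a b : ℕ) :
    Ω → ∀ l : Set.Icc a b, S l := fun ω l => X l ω


/-! Write `A = X_0^{k-2}`, `B = (X_{k-1}, X_k)` and `C = X_{k+1}^K`. Relabelling `X_0^k` as
`(B, A)`, the chain rule splits the left side into `I(B ; Y_{k+1}^{K+1} | C)` and
`I(A ; Y_{k+1}^{K+1} | B, C)`, and `(B, C)` is a relabelling of `X_{k-1}^K`. Splitting off
`Y_{k+1}` in the first term and `Y_{K+1}` in the second, the chain rule leaves in each case one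
extra conditional mutual information, which vanishes by the corresponding Markov chain:
conditional independence of `A` and `B` given a finite-valued `Z` gives
`P(a,b,c) P(c) = P(a,c) P(b,c)`, and this makes every term of `I(A ; B | Z)`, written as a sum over
the values of `(A, B, Z)`, zero. -/

open Real Finset

section Entropy

variable {Ω α β : Type*} [MeasurableSpace Ω] {μ : Measure Ω}
  [MeasurableSpace α] [Fintype α] [MeasurableSingletonClass α]
  [MeasurableSpace β] [Fintype β] [MeasurableSingletonClass β]

lemma entropy_eq_sum_measureReal {X : Ω → α} (hX : Measurable X) :
    entropy μ X = ∑ x, negMulLog (μ.real (X ⁻¹' {x})) := by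
  simp only [entropy, ← measureReal_def, map_measureReal_apply hX (measurableSet_singleton _)]

lemma entropy_comp_eq_sum [IsFiniteMeasure μ] {W : Ω → α} (hW : Measurable W) (f : α → β) :
    entropy μ (fun ω => f (W ω))
      = ∑ w, -μ.real (W ⁻¹' {w}) * log (μ.real ((fun ω => f (W ω)) ⁻¹' {f w})) := by
  classical
  rw [entropy_eq_sum_measureReal (X := fun ω => f (W ω)) ((measurable_of_finite f).comp hW),
    ← Finset.sum_fiberwise univ f]
  refine Finset.sum_congr rfl fun t _ => ?_
  have hfiber : μ.real ((fun ω => f (W ω)) ⁻¹' {t}) = ∑ w with f w = t, μ.real (W ⁻¹' {w}) := by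
    rw [sum_measureReal_preimage_singleton _ fun w _ => hW (measurableSet_singleton w)]
    congr 1
    ext ω
    simp
  calc negMulLog (μ.real ((fun ω => f (W ω)) ⁻¹' {t}))
      = ∑ w with f w = t, -μ.real (W ⁻¹' {w}) * log (μ.real ((fun ω => f (W ω)) ⁻¹' {t})) := by
        rw [negMulLog, ← Finset.sum_mul, Finset.sum_neg_distrib, ← hfiber]
    _ = _ := Finset.sum_congr rfl fun w hw => by rw [(Finset.mem_filter.1 hw).2]

lemma entropy_comp_of_injective [IsFiniteMeasure μ] {X : Ω → α} (hX : Measurable X) {e : α → β}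
    (he : e.Injective) : entropy μ (fun ω => e (X ω)) = entropy μ X := by
  have hid := entropy_comp_eq_sum (μ := μ) hX id
  simp only [id] at hid
  have hfiber (x : α) : (fun ω => e (X ω)) ⁻¹' {e x} = X ⁻¹' {x} := by
    ext ω
    simp [he.eq_iff]
  rw [entropy_comp_eq_sum hX e, hid]
  simp only [hfiber]

end Entropy

lemma measureReal_preimage_singleton_le_comp {Ω α β : Type*} [MeasurableSpace Ω]
    {μ : Measure Ω} [IsFiniteMeasure μ] (X : Ω → α) (f : α → β) (x : α) :
    μ.real (X ⁻¹' {x}) ≤ μ.real ((fun ω => f (X ω)) ⁻¹' {f x}) :=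
  measureReal_mono fun ω (hω : X ω = x) => congrArg f hω

lemma mul_add_log_eq_of_mul_eq {p q r s : ℝ} (hp : 0 ≤ p) (hq : p ≤ q) (hr : p ≤ r) (hs : p ≤ s)
    (h : p * s = q * r) : p * (log p + log s) = p * (log q + log r) := by
  rcases hp.eq_or_lt with rfl | hp
  · simp
  rw [← log_mul hp.ne' (hp.trans_le hs).ne',
    ← log_mul (hp.trans_le hq).ne' (hp.trans_le hr).ne', h]

lemma condMutualInfo_eq_entropy {Ω α β γ : Type*} [MeasurableSpace Ω] [MeasurableSpace α]
    [Fintype α] [MeasurableSpace β] [Fintype β] [MeasurableSpace γ] [Fintype γ]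
    (μ : Measure Ω) (A : Ω → α) (B : Ω → β) (Z : Ω → γ) :
    condMutualInfo μ A B Z
      = entropy μ (fun ω => (A ω, Z ω)) + entropy μ (fun ω => (B ω, Z ω))
        - entropy μ (fun ω => ((A ω, B ω), Z ω)) - entropy μ Z := by
  unfold condMutualInfo condEntropy
  ring

section CondIndep

variable {Ω α β γ : Type*} {mΩ : MeasurableSpace Ω} {μ : Measure Ω} [MeasurableSpace γ]
  {Z : Ω → γ}

lemma setIntegral_condExp_indicator [IsFiniteMeasure μ] {m : MeasurableSpace Ω} (hm : m ≤ mΩ)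
    {u v : Set Ω} (hv : MeasurableSet[mΩ] v) (hu : MeasurableSet[m] u) :
    ∫ ω in u, (μ⟦v | m⟧) ω ∂μ = μ.real (v ∩ u) := by
  rw [setIntegral_condExp hm ((integrable_const (1 : ℝ)).indicator hv) hu,
    setIntegral_indicator hv, setIntegral_const, smul_eq_mul, mul_one, Set.inter_comm]

lemma setIntegral_comp_preimage_singleton [MeasurableSingletonClass γ] (hZ : Measurable Z)
    (g : γ → ℝ) (c : γ) : ∫ ω in Z ⁻¹' {c}, g (Z ω) ∂μ = g c * μ.real (Z ⁻¹' {c}) := by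
  rw [setIntegral_congr_fun (hZ (measurableSet_singleton c)) (g := fun _ => g c)
    fun ω (hω : Z ω = c) => by rw [hω], setIntegral_const, smul_eq_mul, mul_comm]

/-- Conditional expectations given `Z` are constant on the fibres of `Z` (Doob–Dynkin), so
integrating the conditional independence relation over a fibre yields the elementary one. -/
lemma measureReal_inter_mul_of_condIndepFun [IsFiniteMeasure μ] [StandardBorelSpace Ω]
    [MeasurableSpace α] [MeasurableSpace β] [MeasurableSingletonClass γ] {A : Ω → α} {B : Ω → β}
    (hZ : Measurable Z) (h : CondIndepFun (MeasurableSpace.comap Z inferInstance) hZ.comap_le A B μ)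
    (hA : Measurable A) (hB : Measurable B) {s : Set α} {t : Set β} (hs : MeasurableSet s)
    (ht : MeasurableSet t) (c : γ) :
    μ.real (A ⁻¹' s ∩ B ⁻¹' t ∩ Z ⁻¹' {c}) * μ.real (Z ⁻¹' {c})
      = μ.real (A ⁻¹' s ∩ Z ⁻¹' {c}) * μ.real (B ⁻¹' t ∩ Z ⁻¹' {c}) := by
  have hu : MeasurableSet[.comap Z inferInstance] (Z ⁻¹' {c}) :=
    ⟨{c}, measurableSet_singleton c, rfl⟩
  obtain ⟨gs, -, hgs⟩ := (stronglyMeasurable_condExp (m := .comap Z inferInstance) (μ := μ)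
    (f := (A ⁻¹' s).indicator fun _ => (1 : ℝ))).exists_eq_measurable_comp
  obtain ⟨gt, -, hgt⟩ := (stronglyMeasurable_condExp (m := .comap Z inferInstance) (μ := μ)
    (f := (B ⁻¹' t).indicator fun _ => (1 : ℝ))).exists_eq_measurable_comp
  have hfiber {v : Set Ω} (hv : MeasurableSet v) {g : γ → ℝ}
      (hg : μ⟦v | .comap Z inferInstance⟧ = g ∘ Z) :
      μ.real (v ∩ Z ⁻¹' {c}) = g c * μ.real (Z ⁻¹' {c}) := by
    rw [← setIntegral_condExp_indicator hZ.comap_le hv hu, hg]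
    exact setIntegral_comp_preimage_singleton hZ g c
  have hprod := (condIndepFun_iff_condExp_inter_preimage_eq_mul hA hB).1 h s t hs ht
  have hst : μ.real (A ⁻¹' s ∩ B ⁻¹' t ∩ Z ⁻¹' {c}) = gs c * gt c * μ.real (Z ⁻¹' {c}) := by
    rw [← setIntegral_condExp_indicator hZ.comap_le ((hA hs).inter (hB ht)) hu,
      setIntegral_congr_ae (hZ (measurableSet_singleton c)) (hprod.mono fun ω hω _ => hω),
      hgs, hgt]
    exact setIntegral_comp_preimage_singleton hZ (fun z => gs z * gt z) c
  rw [hst, hfiber (hA hs) hgs, hfiber (hB ht) hgt]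
  ring

end CondIndep

section CondMutualInfo

variable {Ω α β γ δ α' β' γ' : Type*} [MeasurableSpace Ω] {μ : Measure Ω} [IsFiniteMeasure μ]
  [MeasurableSpace α] [Fintype α] [MeasurableSingletonClass α]
  [MeasurableSpace β] [Fintype β] [MeasurableSingletonClass β]
  [MeasurableSpace γ] [Fintype γ] [MeasurableSingletonClass γ]
  [MeasurableSpace δ] [Fintype δ] [MeasurableSingletonClass δ]
  [MeasurableSpace α'] [Fintype α'] [MeasurableSingletonClass α']
  [MeasurableSpace β'] [Fintype β'] [MeasurableSingletonClass β']
  [MeasurableSpace γ'] [Fintype γ'] [MeasurableSingletonClass γ']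
  {A : Ω → α} {B : Ω → β} {Z : Ω → γ} {D : Ω → δ}

lemma condMutualInfo_comp_of_injective (hA : Measurable A) (hB : Measurable B)
    (hZ : Measurable Z) {e₁ : α → α'} {e₂ : β → β'} {e₃ : γ → γ'} (he₁ : e₁.Injective)
    (he₂ : e₂.Injective) (he₃ : e₃.Injective) :
    condMutualInfo μ (fun ω => e₁ (A ω)) (fun ω => e₂ (B ω)) (fun ω => e₃ (Z ω))
      = condMutualInfo μ A B Z := by
  rw [condMutualInfo_eq_entropy, condMutualInfo_eq_entropy,
    entropy_comp_of_injective (e := fun p => (e₁ p.1, e₃ p.2)) (hA.prodMk hZ) (he₁.prodMap he₃),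
    entropy_comp_of_injective (e := fun p => (e₂ p.1, e₃ p.2)) (hB.prodMk hZ) (he₂.prodMap he₃),
    entropy_comp_of_injective (e := fun p => ((e₁ p.1.1, e₂ p.1.2), e₃ p.2))
      ((hA.prodMk hB).prodMk hZ) ((he₁.prodMap he₂).prodMap he₃),
    entropy_comp_of_injective hZ he₃]

lemma condMutualInfo_comp_left_of_injective (hA : Measurable A) (hB : Measurable B)
    (hZ : Measurable Z) {e : α → α'} (he : e.Injective) :
    condMutualInfo μ (fun ω => e (A ω)) B Z = condMutualInfo μ A B Z := by
  simpa only [id] using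
    condMutualInfo_comp_of_injective (μ := μ) hA hB hZ he Function.injective_id
      Function.injective_id

lemma condMutualInfo_comp_right_of_injective (hA : Measurable A) (hB : Measurable B)
    (hZ : Measurable Z) {e : β → β'} (he : e.Injective) :
    condMutualInfo μ A (fun ω => e (B ω)) Z = condMutualInfo μ A B Z := by
  simpa only [id] using
    condMutualInfo_comp_of_injective (μ := μ) hA hB hZ Function.injective_id he
      Function.injective_id

lemma condMutualInfo_comp_cond_of_injective (hA : Measurable A) (hB : Measurable B)
    (hZ : Measurable Z) {e : γ → γ'} (he : e.Injective) :
    condMutualInfo μ A B (fun ω => e (Z ω)) = condMutualInfo μ A B Z := by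
  simpa only [id] using
    condMutualInfo_comp_of_injective (μ := μ) hA hB hZ Function.injective_id
      Function.injective_id he

lemma condMutualInfo_comm (hA : Measurable A) (hB : Measurable B) (hZ : Measurable Z) :
    condMutualInfo μ A B Z = condMutualInfo μ B A Z := by
  rw [condMutualInfo_eq_entropy, condMutualInfo_eq_entropy,
    entropy_comp_of_injective (e := fun p => ((p.1.2, p.1.1), p.2)) ((hA.prodMk hB).prodMk hZ)
      (Prod.swap_injective.prodMap Function.injective_id)]
  ring

lemma condMutualInfo_prod_left (hA : Measurable A) (hB : Measurable B) (hD : Measurable D)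
    (hZ : Measurable Z) :
    condMutualInfo μ (fun ω => (A ω, B ω)) D Z
      = condMutualInfo μ A D Z + condMutualInfo μ B D (fun ω => (A ω, Z ω)) := by
  simp only [condMutualInfo_eq_entropy]
  rw [entropy_comp_of_injective (e := fun p : (α × β) × γ => (p.1.2, (p.1.1, p.2)))
      ((hA.prodMk hB).prodMk hZ) (by rintro ⟨⟨_, _⟩, _⟩ ⟨⟨_, _⟩, _⟩ h; simp_all),
    entropy_comp_of_injective (e := fun p : (α × δ) × γ => (p.1.2, (p.1.1, p.2)))
      ((hA.prodMk hD).prodMk hZ) (by rintro ⟨⟨_, _⟩, _⟩ ⟨⟨_, _⟩, _⟩ h; simp_all),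
    entropy_comp_of_injective
      (e := fun p : ((α × β) × δ) × γ => ((p.1.1.2, p.1.2), (p.1.1.1, p.2)))
      (((hA.prodMk hB).prodMk hD).prodMk hZ)
      (by rintro ⟨⟨⟨_, _⟩, _⟩, _⟩ ⟨⟨⟨_, _⟩, _⟩, _⟩ h; simp_all)]
  ring

lemma condMutualInfo_prod_right (hA : Measurable A) (hB : Measurable B) (hD : Measurable D)
    (hZ : Measurable Z) :
    condMutualInfo μ D (fun ω => (A ω, B ω)) Z
      = condMutualInfo μ D A Z + condMutualInfo μ D B (fun ω => (A ω, Z ω)) := by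
  rw [condMutualInfo_comm hD (hA.prodMk hB) hZ, condMutualInfo_prod_left hA hB hD hZ,
    condMutualInfo_comm hA hD hZ, condMutualInfo_comm hB hD (hA.prodMk hZ)]

lemma condMutualInfo_eq_zero_of_factorization (hA : Measurable A) (hB : Measurable B)
    (hZ : Measurable Z)
    (h : ∀ a b c, μ.real ((fun ω => ((A ω, B ω), Z ω)) ⁻¹' {((a, b), c)}) * μ.real (Z ⁻¹' {c})
      = μ.real ((fun ω => (A ω, Z ω)) ⁻¹' {(a, c)}) * μ.real ((fun ω => (B ω, Z ω)) ⁻¹' {(b, c)})) :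
    condMutualInfo μ A B Z = 0 := by
  set W := fun ω => ((A ω, B ω), Z ω)
  have hW : Measurable W := (hA.prodMk hB).prodMk hZ
  rw [condMutualInfo_eq_entropy, entropy_comp_eq_sum hW (fun w => (w.1.1, w.2)),
    entropy_comp_eq_sum hW (fun w => (w.1.2, w.2)), entropy_comp_eq_sum hW (fun w => w),
    entropy_comp_eq_sum hW (fun w => w.2), ← sum_add_distrib, ← sum_sub_distrib,
    ← sum_sub_distrib]
  refine sum_eq_zero fun w _ => ?_
  have := mul_add_log_eq_of_mul_eq measureReal_nonneg
    (measureReal_preimage_singleton_le_comp W (fun w => (w.1.1, w.2)) w)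
    (measureReal_preimage_singleton_le_comp W (fun w => (w.1.2, w.2)) w)
    (measureReal_preimage_singleton_le_comp W (fun w => w.2) w) (h w.1.1 w.1.2 w.2)
  linarith

variable [StandardBorelSpace Ω]

lemma condMutualInfo_eq_zero_of_condIndepFun (hA : Measurable A) (hB : Measurable B)
    (hZ : Measurable Z)
    (h : CondIndepFun (MeasurableSpace.comap Z inferInstance) hZ.comap_le A B μ) :
    condMutualInfo μ A B Z = 0 :=
  condMutualInfo_eq_zero_of_factorization hA hB hZ fun a b c => by
    simpa only [← Set.singleton_prod_singleton, Set.mk_preimage_prod] using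
      measureReal_inter_mul_of_condIndepFun hZ h hA hB (measurableSet_singleton a)
        (measurableSet_singleton b) c

lemma condMutualInfo_prod_right_eq_of_condIndepFun (hA : Measurable A) (hB : Measurable B)
    (hD : Measurable D) (hZ : Measurable Z)
    (h : CondIndepFun (MeasurableSpace.comap (fun ω => (B ω, Z ω)) inferInstance)
      (hB.prodMk hZ).comap_le A D μ) :
    condMutualInfo μ A (fun ω => (B ω, D ω)) Z = condMutualInfo μ A B Z := by
  rw [condMutualInfo_prod_right hB hD hA hZ,
    condMutualInfo_eq_zero_of_condIndepFun hA hD (hB.prodMk hZ) h, add_zero]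

end CondMutualInfo

section Tuple

variable {S : ℕ → Type*}

lemma injective_split_Icc_first {a c : ℕ} (h : a ≤ c) :
    Function.Injective fun p : (∀ l : Set.Icc a c, S l) =>
      (p ⟨a, le_rfl, h⟩, fun l : Set.Icc (a + 1) c => p ⟨l, by grind, l.2.2⟩) := by
  intro p q hpq
  funext ⟨l, hl⟩
  obtain rfl | hl' : l = a ∨ a + 1 ≤ l := by grind
  · exact congrArg Prod.fst hpq
  · exact congrFun (congrArg Prod.snd hpq) ⟨l, hl', hl.2⟩

lemma injective_split_Icc_last {a c : ℕ} (h : a ≤ c + 1) :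
    Function.Injective fun p : (∀ l : Set.Icc a (c + 1), S l) =>
      (p ⟨c + 1, h, le_rfl⟩, fun l : Set.Icc a c => p ⟨l, l.2.1, by grind⟩) := by
  intro p q hpq
  funext ⟨l, hl⟩
  obtain rfl | hl' : l = c + 1 ∨ l ≤ c := by grind
  · exact congrArg Prod.fst hpq
  · exact congrFun (congrArg Prod.snd hpq) ⟨l, hl.1, hl'⟩

lemma injective_split_Icc_first_two {b c : ℕ} (h : b ≤ c) :
    Function.Injective fun p : (∀ l : Set.Icc (b - 1) c, S l) =>
      ((p ⟨b - 1, le_rfl, by omega⟩, p ⟨b, by omega, h⟩),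
        fun l : Set.Icc (b + 1) c => p ⟨l, by grind, l.2.2⟩) := by
  intro p q hpq
  funext ⟨l, hl⟩
  obtain rfl | rfl | hl' : l = b - 1 ∨ l = b ∨ b + 1 ≤ l := by grind
  · exact congrArg (·.1.1) hpq
  · exact congrArg (·.1.2) hpq
  · exact congrFun (congrArg Prod.snd hpq) ⟨l, hl', hl.2⟩

lemma injective_split_Icc_last_two {a b : ℕ} (h : a ≤ b - 1) :
    Function.Injective fun p : (∀ l : Set.Icc a b, S l) =>
      ((p ⟨b - 1, h, by omega⟩, p ⟨b, by omega, le_rfl⟩),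
        fun l : Set.Icc a (b - 2) => p ⟨l, l.2.1, by grind⟩) := by
  intro p q hpq
  funext ⟨l, hl⟩
  obtain hl' | rfl | rfl : l ≤ b - 2 ∨ l = b - 1 ∨ l = b := by grind
  · exact congrFun (congrArg Prod.snd hpq) ⟨l, hl.1, hl'⟩
  · exact congrArg (·.1.1) hpq
  · exact congrArg (·.1.2) hpq

end Tuple

theorem cutset_reduction_coupled_relays_general
    {Ω : Type*} [MeasurableSpace Ω] [StandardBorelSpace Ω]
    {S T : ℕ → Type*}
    [∀ i, MeasurableSpace (S i)] [∀ i, Fintype (S i)]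
    [∀ i, DiscreteMeasurableSpace (S i)]
    [∀ i, MeasurableSpace (T i)] [∀ i, Fintype (T i)]
    [∀ i, DiscreteMeasurableSpace (T i)]
    (μ : Measure Ω) [IsProbabilityMeasure μ]
    (K k : ℕ) (hk2 : k ≤ K - 1)
    (X : ∀ i, Ω → S i) (Y : ∀ i, Ω → T i)
    (hX : ∀ i, Measurable (X i)) (hY : ∀ i, Measurable (Y i))
    (hMarkov1 : CondIndepFun
      (MeasurableSpace.comap
        (fun ω => (Y (k + 1) ω, tuple X (k + 1) K ω)) inferInstance)
      (Measurable.comap_le (show Measurable (fun ω => (Y (k + 1) ω, tuple X (k + 1) K ω)) from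
        (hY (k + 1)).prodMk (measurable_pi_lambda _ (fun l => hX l))))
      (fun ω => (X (k - 1) ω, X k ω)) (tuple Y (k + 2) (K + 1)) μ)
    (hMarkov2 : CondIndepFun
      (MeasurableSpace.comap
        (fun ω => (Y (K + 1) ω, tuple X (k - 1) K ω)) inferInstance)
      (Measurable.comap_le (show Measurable (fun ω => (Y (K + 1) ω, tuple X (k - 1) K ω)) from
        (hY (K + 1)).prodMk (measurable_pi_lambda _ (fun l => hX l))))
      (tuple X 0 (k - 2)) (tuple Y (k + 1) K) μ) :
    condMutualInfo μ (tuple X 0 k) (tuple Y (k + 1) (K + 1)) (tuple X (k + 1) K)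
      = condMutualInfo μ (fun ω => (X (k - 1) ω, X k ω)) (Y (k + 1)) (tuple X (k + 1) K)
        + condMutualInfo μ (tuple X 0 (k - 2)) (Y (K + 1)) (tuple X (k - 1) K) := by
  have hXt (a b : ℕ) : Measurable (tuple X a b) := measurable_pi_lambda _ fun l => hX l
  have hYt (a b : ℕ) : Measurable (tuple Y a b) := measurable_pi_lambda _ fun l => hY l
  have hB : Measurable fun ω => (X (k - 1) ω, X k ω) := (hX _).prodMk (hX _)
  have hrelays : condMutualInfo μ (fun ω => (X (k - 1) ω, X k ω)) (tuple Y (k + 1) (K + 1))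
      (tuple X (k + 1) K)
        = condMutualInfo μ (fun ω => (X (k - 1) ω, X k ω)) (Y (k + 1)) (tuple X (k + 1) K) := by
    rw [← condMutualInfo_comp_right_of_injective hB (hYt _ _) (hXt _ _)
      (injective_split_Icc_first (by omega))]
    exact condMutualInfo_prod_right_eq_of_condIndepFun hB (hY _) (hYt _ _) (hXt _ _) hMarkov1
  have hregroup : condMutualInfo μ (tuple X 0 (k - 2)) (tuple Y (k + 1) (K + 1))
      (fun ω => ((X (k - 1) ω, X k ω), tuple X (k + 1) K ω))
        = condMutualInfo μ (tuple X 0 (k - 2)) (tuple Y (k + 1) (K + 1)) (tuple X (k - 1) K) := by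
    rw [← condMutualInfo_comp_cond_of_injective (hXt _ _) (hYt _ _) (hXt _ _)
      (injective_split_Icc_first_two (by omega))]
  have hsource : condMutualInfo μ (tuple X 0 (k - 2)) (tuple Y (k + 1) (K + 1)) (tuple X (k - 1) K)
      = condMutualInfo μ (tuple X 0 (k - 2)) (Y (K + 1)) (tuple X (k - 1) K) := by
    rw [← condMutualInfo_comp_right_of_injective (hXt _ _) (hYt _ _) (hXt _ _)
      (injective_split_Icc_last (by omega))]
    exact condMutualInfo_prod_right_eq_of_condIndepFun (hXt _ _) (hY _) (hYt _ _) (hXt _ _)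
      hMarkov2
  rw [← condMutualInfo_comp_left_of_injective (hXt _ _) (hYt _ _) (hXt _ _)
      (injective_split_Icc_last_two (Nat.zero_le _)),
    condMutualInfo_prod_left hB (hXt _ _) (hYt _ _) (hXt _ _), hrelays, hregroup, hsource]

/-- Converse step of Theorem 3 (coupled relays): for `2 ≤ k ≤ K - 1`, if
`(X_{k-1}, X_k) – (Y_{k+1}, X_{k+1}^K) – Y_{k+2}^{K+1}` and
`X_0^{k-2} – (Y_{K+1}, X_{k-1}^K) – Y_{k+1}^K` are Markov chains, then
`I(X_0^k ; Y_{k+1}^{K+1} | X_{k+1}^K)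
  = I((X_{k-1}, X_k) ; Y_{k+1} | X_{k+1}^K) + I(X_0^{k-2} ; Y_{K+1} | X_{k-1}^K)`. -/
theorem cutset_reduction_coupled_relays
    {Ω : Type*} [MeasurableSpace Ω] [StandardBorelSpace Ω]
    {S T : ℕ → Type*}
    [∀ i, MeasurableSpace (S i)] [∀ i, Fintype (S i)] [∀ i, Nonempty (S i)]
    [∀ i, DiscreteMeasurableSpace (S i)]
    [∀ i, MeasurableSpace (T i)] [∀ i, Fintype (T i)] [∀ i, Nonempty (T i)]
    [∀ i, DiscreteMeasurableSpace (T i)]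
    (μ : Measure Ω) [IsProbabilityMeasure μ]
    (K k : ℕ) (hK : 3 ≤ K) (hk1 : 2 ≤ k) (hk2 : k ≤ K - 1)
    (X : ∀ i, Ω → S i) (Y : ∀ i, Ω → T i)
    (hX : ∀ i, Measurable (X i)) (hY : ∀ i, Measurable (Y i))
    (hMarkov1 : CondIndepFun
      (MeasurableSpace.comap
        (fun ω => (Y (k + 1) ω, tuple X (k + 1) K ω)) inferInstance)
      (Measurable.comap_le (show Measurable (fun ω => (Y (k + 1) ω, tuple X (k + 1) K ω)) from
        (hY (k + 1)).prodMk (measurable_pi_lambda _ (fun l => hX l))))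
      (fun ω => (X (k - 1) ω, X k ω)) (tuple Y (k + 2) (K + 1)) μ)
    (hMarkov2 : CondIndepFun
      (MeasurableSpace.comap
        (fun ω => (Y (K + 1) ω, tuple X (k - 1) K ω)) inferInstance)
      (Measurable.comap_le (show Measurable (fun ω => (Y (K + 1) ω, tuple X (k - 1) K ω)) from
        (hY (K + 1)).prodMk (measurable_pi_lambda _ (fun l => hX l))))
      (tuple X 0 (k - 2)) (tuple Y (k + 1) K) μ) :
    condMutualInfo μ (tuple X 0 k) (tuple Y (k + 1) (K + 1)) (tuple X (k + 1) K)
      = condMutualInfo μ (fun ω => (X (k - 1) ω, X k ω)) (Y (k + 1)) (tuple X (k + 1) K)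
        + condMutualInfo μ (tuple X 0 (k - 2)) (Y (K + 1)) (tuple X (k - 1) K) :=
  cutset_reduction_coupled_relays_general μ K k hk2 X Y hX hY hMarkov1 hMarkov2
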